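/- Suppose ∘ is a bilinear operation on sl₂(ℂ) satisfying the anti-pre-Lie identity and compatibility with the bracket, of root graded form with constants α₁, β₁, γ₁, λ₁ as in h∘e = α₁e, e∘h = (α₁−2)e, h∘f = β₁f, f∘h = (β₁+2)f, e∘f = γ₁h, f∘e = (γ₁−1)h, h∘h = λ₁h, e∘e = f∘f = 0. Then the anti-pre-Lie identity applied to (e, h, h) and (f, h, h) yields (λ₁−α₁)(α₁−2) = 2(α₁−2) and (λ₁−β₁)(β₁+2) = −2(β₁+2), and hence (using α₁ ≠ 2, β₁ ≠ −2) α₁ = λ₁ − 2 and β₁ = λ₁ + 2. -/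

import Mathlib

/-! If `h ∘ x = a x`, `x ∘ h = b x` and `h ∘ h = l h`, both sides of the anti-pre-Lie identity at
`(x, h, h)` are multiples of `x`, namely `(l - a) b x` and `(a - b) b x`. For `x = e` and `x = f`
this gives the two relations; cancelling `α₁ - 2` and `β₁ + 2` gives the values of `α₁, β₁`. -/

def IsAntiPreLie {K V : Type*} [CommRing K] [AddCommGroup V] [Module K V]
    (c : V →ₗ[K] V →ₗ[K] V) : Prop :=
  ∀ x y z : V, c x (c y z) - c y (c x z) = c (c y x - c x y) z

theorem IsAntiPreLie.eigenvalue_relation {K V : Type*} [Field K] [AddCommGroup V]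
    [Module K V] {c : V →ₗ[K] V →ₗ[K] V} (hc : IsAntiPreLie c)
    {x h : V} (hx : x ≠ 0) {a b l : K}
    (hhx : c h x = a • x) (hxh : c x h = b • x) (hhh : c h h = l • h) :
    (l - a) * b = (a - b) * b := by
  have key := hc x h h
  simp only [hhh, hhx, hxh, map_smul, LinearMap.smul_apply, smul_smul, ← sub_smul] at key
  refine smul_left_injective K hx ?_
  convert key using 2
  ring

theorem stmt19_general {A : Type*} [AddCommGroup A] [Module ℂ A]
    (B : Module.Basis (Fin 3) ℂ A) (e f h : A)
    (he : e = B 0) (hf : f = B 1)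
    (c : A →ₗ[ℂ] A →ₗ[ℂ] A)
    (α₁ β₁ lam₁ : ℂ)
    (apl : ∀ x y z : A, c x (c y z) - c y (c x z) = c (c y x - c x y) z)
    (hhe : c h e = α₁ • e) (heh : c e h = (α₁ - 2) • e)
    (hhf : c h f = β₁ • f) (hfh : c f h = (β₁ + 2) • f)
    (hhh : c h h = lam₁ • h) :
    ((lam₁ - α₁) * (α₁ - 2) = 2 * (α₁ - 2) ∧
     (lam₁ - β₁) * (β₁ + 2) = -2 * (β₁ + 2)) ∧
    (α₁ ≠ 2 → β₁ ≠ -2 → α₁ = lam₁ - 2 ∧ β₁ = lam₁ + 2) := by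
  have hapl : IsAntiPreLie c := apl
  have rel_e : (lam₁ - α₁) * (α₁ - 2) = 2 * (α₁ - 2) := by
    linear_combination hapl.eigenvalue_relation (he ▸ B.ne_zero 0) hhe heh hhh
  have rel_f : (lam₁ - β₁) * (β₁ + 2) = -2 * (β₁ + 2) := by
    linear_combination hapl.eigenvalue_relation (hf ▸ B.ne_zero 1) hhf hfh hhh
  refine ⟨⟨rel_e, rel_f⟩, fun hα hβ => ⟨?_, ?_⟩⟩
  · have := mul_right_cancel₀ (sub_ne_zero.mpr hα) rel_e
    linear_combination -this
  · have := mul_right_cancel₀ (fun h0 => hβ (eq_neg_of_add_eq_zero_left h0)) rel_f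
    linear_combination -this

/-- For a root graded compatible anti-pre-Lie operation on `sl₂(ℂ)` with
constants `α₁, β₁, γ₁, λ₁`, the anti-pre-Lie identity applied to `(e,h,h)` and `(f,h,h)`
yields `(λ₁−α₁)(α₁−2) = 2(α₁−2)` and `(λ₁−β₁)(β₁+2) = −2(β₁+2)`; hence, using
`α₁ ≠ 2`, `β₁ ≠ −2`, one gets `α₁ = λ₁ − 2` and `β₁ = λ₁ + 2`. -/
theorem stmt19 {A : Type*} [AddCommGroup A] [Module ℂ A]
    (B : Module.Basis (Fin 3) ℂ A) (e f h : A)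
    (he : e = B 0) (hf : f = B 1) (hh : h = B 2)
    (c : A →ₗ[ℂ] A →ₗ[ℂ] A)
    (α₁ β₁ γ₁ lam₁ : ℂ)
    (apl : ∀ x y z : A, c x (c y z) - c y (c x z) = c (c y x - c x y) z)
    (hhe : c h e = α₁ • e) (heh : c e h = (α₁ - 2) • e)
    (hhf : c h f = β₁ • f) (hfh : c f h = (β₁ + 2) • f)
    (hef : c e f = γ₁ • h) (hfe : c f e = (γ₁ - 1) • h)
    (hhh : c h h = lam₁ • h) (hee : c e e = 0) (hff : c f f = 0) :
    ((lam₁ - α₁) * (α₁ - 2) = 2 * (α₁ - 2) ∧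
     (lam₁ - β₁) * (β₁ + 2) = -2 * (β₁ + 2)) ∧
    (α₁ ≠ 2 → β₁ ≠ -2 → α₁ = lam₁ - 2 ∧ β₁ = lam₁ + 2) :=
  stmt19_general B e f h he hf c α₁ β₁ lam₁ apl hhe heh hhf hfh hhh
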